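/- Let M = (⋃_{n≥0} A_n) ∪ ([0,1]×{0}) ⊆ ℝ², where A_n = {(k/2ⁿ, 1/2ⁿ) : k ∈ {0,…,2ⁿ}}, let N be a norm on ℝ² with max(|v₁|,|v₂|) ≤ N(v₁,v₂) ≤ |v₁|+|v₂| for all (v₁,v₂) ∈ ℝ², and endow M with the metric d(u,v) = N(u−v). Then for every Banach space Y, SNA(M,Y) is dense: for every Lipschitz map f : M → Y and every ε > 0 there is a Lipschitz map g : M → Y that strongly attains its norm and satisfies ‖f−g‖_L ≤ ε. -/

import Mathlib

/-- The level `A_n = {(k/2ⁿ, 1/2ⁿ) : 0 ≤ k ≤ 2ⁿ}`. -/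
def Aset (n : ℕ) : Set (ℝ × ℝ) :=
  {p | ∃ k : ℕ, k ≤ 2 ^ n ∧ p = ((k : ℝ) / 2 ^ n, 1 / 2 ^ n)}

/-- The metric space `M = (⋃ₙ Aₙ) ∪ ([0,1] × {0}) ⊆ ℝ²`. -/
def Mset : Set (ℝ × ℝ) := (⋃ n : ℕ, Aset n) ∪ (Set.Icc (0 : ℝ) 1 ×ˢ ({0} : Set ℝ))

/-- `N` is a norm on `ℝ²` satisfying `‖·‖_∞ ≤ N ≤ ‖·‖₁`. -/
def IsNormBetween (N : ℝ × ℝ → ℝ) : Prop :=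
  (∀ u v : ℝ × ℝ, N (u + v) ≤ N u + N v) ∧
  (∀ (c : ℝ) (v : ℝ × ℝ), N (c • v) = |c| * N v) ∧
  (∀ v : ℝ × ℝ, max |v.1| |v.2| ≤ N v ∧ N v ≤ |v.1| + |v.2|)

/-- `f : M → Y` is Lipschitz with respect to the metric `d(u,v) = N(u - v)`. -/
def LipM {Y : Type*} [NormedAddCommGroup Y] (N : ℝ × ℝ → ℝ) (f : ↥Mset → Y) : Prop :=
  ∃ K : ℝ, ∀ p q : ↥Mset, ‖f p - f q‖ ≤ K * N ((p : ℝ × ℝ) - (q : ℝ × ℝ))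

/-- The least Lipschitz constant of `f : M → Y` with respect to `d(u,v) = N(u - v)`. -/
noncomputable def lipNM {Y : Type*} [NormedAddCommGroup Y] (N : ℝ × ℝ → ℝ)
    (f : ↥Mset → Y) : ℝ :=
  sSup {r : ℝ | ∃ p q : ↥Mset, p ≠ q ∧ r = ‖f p - f q‖ / N ((p : ℝ × ℝ) - (q : ℝ × ℝ))}

/-- `f` strongly attains its norm on `(M, N)`. -/
def SNAM {Y : Type*} [NormedAddCommGroup Y] (N : ℝ × ℝ → ℝ) (f : ↥Mset → Y) : Prop :=
  ∃ p q : ↥Mset, p ≠ q ∧ ‖f p - f q‖ = lipNM N f * N ((p : ℝ × ℝ) - (q : ℝ × ℝ))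

/-!
If `lipNM N f ≤ ε`, take `g = 0`. Otherwise let `L = lipNM N f` and call a grid point
`p = (k/2ⁿ, 1/2ⁿ)` good if some `x ≠ p` has `L d(p, x) ≤ ‖f p - f x‖ + ε r`, where `r = 1/2ⁿ⁺¹` is
a radius isolating `p` in `M`. At a good point, pushing `f p` a distance `ε r` away from `f x`
changes `f` by at most `ε` in Lipschitz norm and gives the pair `(p, x)` slope at least `L`; as
`M \ {p}` is compact, the slopes of the new map from `p` attain their maximum, which is then its
Lipschitz constant.

A good point exists: otherwise each step between neighbours on a level has slope at most
`L - ε/2`, so any two grid points, compared either directly or through a vertical descent followed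
by a walk along a level, have slope at most `L - ε²/(8L)`. The grid is dense in `M`, so this bound
holds for `f` itself, contradicting the definition of `L`.
-/

namespace IsNormBetween

variable {N : ℝ × ℝ → ℝ}

theorem abs_fst_le (hN : IsNormBetween N) (v : ℝ × ℝ) : |v.1| ≤ N v :=
  (le_max_left _ _).trans (hN.2.2 v).1

theorem abs_snd_le (hN : IsNormBetween N) (v : ℝ × ℝ) : |v.2| ≤ N v :=
  (le_max_right _ _).trans (hN.2.2 v).1

theorem nonneg (hN : IsNormBetween N) (v : ℝ × ℝ) : 0 ≤ N v :=
  (abs_nonneg _).trans (hN.abs_fst_le v)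

theorem pos (hN : IsNormBetween N) {v : ℝ × ℝ} (hv : v ≠ 0) : 0 < N v := by
  rcases v with ⟨a, b⟩
  by_cases ha : a = 0
  · subst ha
    have hb : b ≠ 0 := fun hb => hv (by simp [hb])
    exact (abs_pos.mpr hb).trans_le (hN.abs_snd_le (0, b))
  · exact (abs_pos.mpr ha).trans_le (hN.abs_fst_le (a, b))

theorem map_zero (hN : IsNormBetween N) : N 0 = 0 := by
  simpa using hN.2.1 0 0

theorem map_sub_rev (hN : IsNormBetween N) (u v : ℝ × ℝ) : N (u - v) = N (v - u) := by
  simpa using hN.2.1 (-1) (v - u)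

theorem map_sub_le_add (hN : IsNormBetween N) (u v w : ℝ × ℝ) :
    N (u - w) ≤ N (u - v) + N (v - w) := by
  simpa using hN.1 (u - v) (v - w)

theorem map_sub_of_snd_eq (hN : IsNormBetween N) {u v : ℝ × ℝ} (h : u.2 = v.2) :
    N (u - v) = |u.1 - v.1| := by
  have := hN.2.2 (u - v)
  simp only [Prod.fst_sub, Prod.snd_sub, h, sub_self, abs_zero, add_zero] at this
  exact le_antisymm this.2 ((le_max_left _ _).trans this.1)

theorem map_sub_of_fst_eq (hN : IsNormBetween N) {u v : ℝ × ℝ} (h : u.1 = v.1) :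
    N (u - v) = |u.2 - v.2| := by
  have := hN.2.2 (u - v)
  simp only [Prod.fst_sub, Prod.snd_sub, h, sub_self, abs_zero, zero_add] at this
  exact le_antisymm this.2 ((le_max_right _ _).trans this.1)

theorem le_two_mul_norm (hN : IsNormBetween N) (v : ℝ × ℝ) : N v ≤ 2 * ‖v‖ := by
  have h1 : |v.1| ≤ ‖v‖ := le_max_left ‖v.1‖ ‖v.2‖
  have h2 : |v.2| ≤ ‖v‖ := le_max_right ‖v.1‖ ‖v.2‖
  linarith [(hN.2.2 v).2]

theorem abs_sub_le_map_sub (hN : IsNormBetween N) (u v : ℝ × ℝ) : |N u - N v| ≤ N (u - v) := by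
  have hu := hN.1 (u - v) v
  have hv := hN.1 (v - u) u
  rw [sub_add_cancel] at hu hv
  rw [← hN.map_sub_rev u v] at hv
  rw [abs_sub_le_iff]
  constructor <;> linarith

theorem continuous (hN : IsNormBetween N) : Continuous N := by
  refine (LipschitzWith.of_dist_le_mul fun u v => ?_).continuous (K := 2)
  rw [Real.dist_eq, dist_eq_norm, NNReal.coe_ofNat]
  exact (hN.abs_sub_le_map_sub u v).trans (hN.le_two_mul_norm _)

end IsNormBetween

open Set

noncomputable def gridPt (n k : ℕ) : ℝ × ℝ := ((k : ℝ) / 2 ^ n, 1 / 2 ^ n)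

theorem gridPt_mem_Mset {n k : ℕ} (hk : k ≤ 2 ^ n) : gridPt n k ∈ Mset :=
  Or.inl (mem_iUnion.mpr ⟨n, k, hk, rfl⟩)

noncomputable def gridM (n k : ℕ) (hk : k ≤ 2 ^ n) : ↥Mset := ⟨gridPt n k, gridPt_mem_Mset hk⟩

@[simp]
theorem coe_gridM {n k : ℕ} (hk : k ≤ 2 ^ n) : (gridM n k hk : ℝ × ℝ) = gridPt n k := rfl

theorem IsNormBetween.map_gridPt_sub_gridPt {N : ℝ × ℝ → ℝ} (hN : IsNormBetween N) (m k l : ℕ) :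
    N (gridPt m k - gridPt m l) = |(k : ℝ) - l| * (1 / 2 ^ m) := by
  rw [hN.map_sub_of_snd_eq (u := gridPt m k) (v := gridPt m l) rfl]
  simp only [gridPt]
  rw [← sub_div, abs_div, abs_of_pos (by positivity : (0 : ℝ) < 2 ^ m), div_eq_mul_one_div]

theorem mem_Mset_iff {z : ℝ × ℝ} :
    z ∈ Mset ↔ (∃ n k, k ≤ 2 ^ n ∧ z = gridPt n k) ∨ (z.1 ∈ Icc 0 1 ∧ z.2 = 0) := by
  simp only [Mset, Aset, gridPt, mem_union, mem_iUnion, mem_ofPred_eq, mem_prod,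
    mem_singleton_iff]

theorem one_div_two_pow_succ (n : ℕ) : (1 : ℝ) / 2 ^ (n + 1) = 1 / 2 ^ n / 2 := by
  rw [pow_succ, div_div]

theorem one_div_two_pow_succ_le_abs_sub {m n : ℕ} (h : m ≠ n) :
    (1 : ℝ) / 2 ^ (n + 1) ≤ |1 / 2 ^ n - 1 / 2 ^ m| := by
  have hn := one_div_two_pow_succ n
  have hm := one_div_two_pow_succ m
  have hpos : (0 : ℝ) < 1 / 2 ^ (n + 1) := by positivity
  rcases Nat.lt_or_gt_of_ne h with hlt | hlt
  · have := one_div_pow_le_one_div_pow_of_le (a := (2 : ℝ)) one_le_two (by omega : m + 1 ≤ n)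
    rw [abs_sub_comm, abs_of_pos (by linarith)]
    linarith
  · have := one_div_pow_le_one_div_pow_of_le (a := (2 : ℝ)) one_le_two (by omega : n + 1 ≤ m)
    rw [abs_of_pos (by linarith)]
    linarith

theorem one_le_abs_natCast_sub {k l : ℕ} (h : k ≠ l) : (1 : ℝ) ≤ |(k : ℝ) - l| := by
  rcases Nat.lt_or_gt_of_ne h with hlt | hlt
  · have : (k : ℝ) + 1 ≤ l := by exact_mod_cast hlt
    rw [abs_sub_comm, abs_of_pos (by linarith)]
    linarith
  · have : (l : ℝ) + 1 ≤ k := by exact_mod_cast hlt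
    rw [abs_of_pos (by linarith)]
    linarith

theorem gridPt_isolated {N : ℝ × ℝ → ℝ} (hN : IsNormBetween N) {n k : ℕ} {y : ℝ × ℝ}
    (hy : y ∈ Mset) (hne : y ≠ gridPt n k) : 1 / 2 ^ (n + 1) ≤ N (gridPt n k - y) := by
  have hn : (1 : ℝ) / 2 ^ (n + 1) ≤ 1 / 2 ^ n := by
    rw [one_div_two_pow_succ]; linarith [show (0 : ℝ) < 1 / 2 ^ n by positivity]
  rcases mem_Mset_iff.mp hy with ⟨m, l, -, rfl⟩ | ⟨-, hy2⟩
  · by_cases hmn : m = n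
    · subst hmn
      have hkl : k ≠ l := fun h => hne (h ▸ rfl)
      calc (1 : ℝ) / 2 ^ (m + 1) ≤ 1 * (1 / 2 ^ m) := by rwa [one_mul]
        _ ≤ |(k : ℝ) - l| * (1 / 2 ^ m) := by gcongr; exact one_le_abs_natCast_sub hkl
        _ = N (gridPt m k - gridPt m l) := (hN.map_gridPt_sub_gridPt m k l).symm
    · exact (one_div_two_pow_succ_le_abs_sub hmn).trans
        (hN.abs_snd_le (gridPt n k - gridPt m l))
  · calc (1 : ℝ) / 2 ^ (n + 1) ≤ |(gridPt n k - y).2| := by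
          rw [Prod.snd_sub, hy2, sub_zero, gridPt, abs_of_pos (by positivity)]; exact hn
      _ ≤ N (gridPt n k - y) := hN.abs_snd_le _

theorem finite_Aset (n : ℕ) : (Aset n).Finite :=
  ((finite_Iic (2 ^ n)).image (gridPt n)).subset fun _ ⟨k, hk, hz⟩ => ⟨k, hk, hz.symm⟩

theorem Mset_eq_iInter :
    Mset = ⋂ m : ℕ, ((⋃ n ∈ Iio m, Aset n) ∪ Icc (0 : ℝ) 1 ×ˢ Icc (0 : ℝ) (1 / 2 ^ m)) := by
  ext z
  simp only [mem_iInter, mem_union, mem_iUnion, mem_Iio, mem_prod, exists_prop]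
  constructor
  · intro hz m
    rcases mem_Mset_iff.mp hz with ⟨n, k, hk, rfl⟩ | ⟨h1, h2⟩
    · rcases lt_or_ge n m with hnm | hnm
      · exact Or.inl ⟨n, hnm, k, hk, rfl⟩
      · simp only [gridPt]
        refine Or.inr ⟨⟨by positivity, ?_⟩, by positivity,
          one_div_pow_le_one_div_pow_of_le one_le_two hnm⟩
        rw [div_le_one (by positivity)]
        exact_mod_cast hk
    · exact Or.inr ⟨h1, by rw [h2]; exact ⟨le_rfl, by positivity⟩⟩
  · intro hz
    rcases le_or_gt z.2 0 with h2 | h2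
    · rcases hz 0 with ⟨n, hn, -⟩ | ⟨h1, h2', -⟩
      · exact absurd hn (Nat.not_lt_zero n)
      · exact mem_Mset_iff.mpr (Or.inr ⟨h1, le_antisymm h2 h2'⟩)
    · obtain ⟨m, hm⟩ := exists_pow_lt_of_lt_one h2 (one_half_lt_one (α := ℝ))
      rw [one_div_pow] at hm
      rcases hz m with ⟨n, -, hn⟩ | ⟨-, -, h2'⟩
      · exact Or.inl (mem_iUnion.mpr ⟨n, hn⟩)
      · exact absurd h2' (not_le.mpr hm)

theorem isCompact_Mset : IsCompact Mset := by
  have hF : ∀ m : ℕ,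
      IsCompact ((⋃ n ∈ Iio m, Aset n) ∪ Icc (0 : ℝ) 1 ×ˢ Icc (0 : ℝ) (1 / 2 ^ m)) := fun m =>
    ((finite_Iio m).biUnion fun n _ => finite_Aset n).isCompact.union
      (isCompact_Icc.prod isCompact_Icc)
  rw [Mset_eq_iInter]
  exact (hF 0).of_isClosed_subset (isClosed_iInter fun m => (hF m).isClosed) (iInter_subset _ 0)

theorem exists_gridPt_near {N : ℝ × ℝ → ℝ} (hN : IsNormBetween N) {z : ℝ × ℝ} (hz : z ∈ Mset)
    {η : ℝ} (hη : 0 < η) : ∃ n k, k ≤ 2 ^ n ∧ N (z - gridPt n k) < η := by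
  rcases mem_Mset_iff.mp hz with ⟨n, k, hk, rfl⟩ | ⟨⟨h0, h1⟩, h2⟩
  · exact ⟨n, k, hk, by rwa [sub_self, hN.map_zero]⟩
  obtain ⟨m, hm⟩ := exists_pow_lt_of_lt_one (half_pos hη) (one_half_lt_one (α := ℝ))
  rw [one_div_pow] at hm
  have h2m : (0 : ℝ) < 2 ^ m := by positivity
  set k := ⌊z.1 * 2 ^ m⌋₊
  have hk : k ≤ 2 ^ m := Nat.floor_le_of_le (by push_cast; nlinarith)
  have hk_le : (k : ℝ) ≤ z.1 * 2 ^ m := Nat.floor_le (by positivity)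
  have hk_gt : z.1 * 2 ^ m < k + 1 := Nat.lt_floor_add_one _
  have hfst : |(z - gridPt m k).1| ≤ 1 / 2 ^ m := by
    have e : z.1 - k / 2 ^ m = (z.1 * 2 ^ m - k) / 2 ^ m := by field_simp
    rw [Prod.fst_sub, gridPt, e, abs_div, abs_of_pos h2m, div_le_div_iff_of_pos_right h2m,
      abs_le]
    constructor <;> linarith
  refine ⟨m, k, hk, ?_⟩
  calc N (z - gridPt m k) ≤ |(z - gridPt m k).1| + |(z - gridPt m k).2| := (hN.2.2 _).2
    _ ≤ 1 / 2 ^ m + 1 / 2 ^ m := by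
        gcongr
        rw [Prod.snd_sub, h2, gridPt, zero_sub, abs_neg, abs_of_pos (by positivity)]
    _ < η := by linarith

instance : Nontrivial ↥Mset :=
  ⟨⟨⟨(0, 0), mem_Mset_iff.mpr (Or.inr ⟨⟨le_rfl, zero_le_one⟩, rfl⟩)⟩,
    ⟨(1, 0), mem_Mset_iff.mpr (Or.inr ⟨⟨zero_le_one, le_rfl⟩, rfl⟩)⟩, by simp⟩⟩

section Lipschitz

variable {N : ℝ × ℝ → ℝ} {Y : Type*} [NormedAddCommGroup Y] {f : ↥Mset → Y}

theorem IsNormBetween.pos_of_ne (hN : IsNormBetween N) {p q : ↥Mset} (h : p ≠ q) :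
    0 < N (↑p - ↑q) :=
  hN.pos (sub_ne_zero.mpr (Subtype.coe_ne_coe.mpr h))

theorem lipNM_le (hN : IsNormBetween N) {c : ℝ}
    (h : ∀ p q : ↥Mset, p ≠ q → ‖f p - f q‖ ≤ c * N (↑p - ↑q)) : lipNM N f ≤ c := by
  obtain ⟨p, q, hpq⟩ := exists_pair_ne ↥Mset
  refine csSup_le ⟨_, p, q, hpq, rfl⟩ ?_
  rintro r ⟨p, q, hpq, rfl⟩
  exact (div_le_iff₀ (hN.pos_of_ne hpq)).mpr (h p q hpq)

theorem LipM.bddAbove (hN : IsNormBetween N) (hf : LipM N f) :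
    BddAbove {r | ∃ p q : ↥Mset, p ≠ q ∧ r = ‖f p - f q‖ / N (↑p - ↑q)} := by
  obtain ⟨K, hK⟩ := hf
  refine ⟨K, ?_⟩
  rintro r ⟨p, q, hpq, rfl⟩
  exact (div_le_iff₀ (hN.pos_of_ne hpq)).mpr (hK p q)

theorem LipM.norm_sub_le (hN : IsNormBetween N) (hf : LipM N f) (p q : ↥Mset) :
    ‖f p - f q‖ ≤ lipNM N f * N (↑p - ↑q) := by
  rcases eq_or_ne p q with rfl | hpq
  · simp [hN.map_zero]
  · exact (div_le_iff₀ (hN.pos_of_ne hpq)).mp (le_csSup (hf.bddAbove hN) ⟨p, q, hpq, rfl⟩)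

theorem lipNM_nonneg (hN : IsNormBetween N) (hf : LipM N f) : 0 ≤ lipNM N f := by
  obtain ⟨p, q, hpq⟩ := exists_pair_ne ↥Mset
  exact (div_nonneg (norm_nonneg _) (hN.nonneg _)).trans
    (le_csSup (hf.bddAbove hN) ⟨p, q, hpq, rfl⟩)

theorem LipM.continuous (hN : IsNormBetween N) (hf : LipM N f) : Continuous f := by
  obtain ⟨K, hK⟩ := hf
  refine (LipschitzWith.of_dist_le' (K := 2 * |K|) fun p q => ?_).continuous
  rw [dist_eq_norm, Subtype.dist_eq, dist_eq_norm]
  calc ‖f p - f q‖ ≤ |K| * N (↑p - ↑q) :=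
        (hK p q).trans (mul_le_mul_of_nonneg_right (le_abs_self K) (hN.nonneg _))
    _ ≤ |K| * (2 * ‖(p : ℝ × ℝ) - q‖) := by gcongr; exact hN.le_two_mul_norm _
    _ = 2 * |K| * ‖(p : ℝ × ℝ) - q‖ := by ring

theorem LipM.norm_sub_le_of_eq_off (hN : IsNormBetween N) (hf : LipM N f) {g : ↥Mset → Y}
    {p : ↥Mset} {R : ℝ} (hR : lipNM N f ≤ R) (hg : ∀ y, y ≠ p → g y = f y)
    (hp : ∀ y, y ≠ p → ‖g p - g y‖ ≤ R * N (↑p - ↑y)) (y z : ↥Mset) :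
    ‖g y - g z‖ ≤ R * N (↑y - ↑z) := by
  rcases eq_or_ne y p with rfl | hy <;> rcases eq_or_ne z y with rfl | hz
  · simp [hN.map_zero]
  · exact hp z hz
  · simp [hN.map_zero]
  · rcases eq_or_ne z p with rfl | hzp
    · rw [norm_sub_rev, hN.map_sub_rev]; exact hp y hy
    · rw [hg y hy, hg z hzp]
      exact (hf.norm_sub_le hN y z).trans (mul_le_mul_of_nonneg_right hR (hN.nonneg _))

theorem SNAM_of_forall_le (hN : IsNormBetween N) {p q : ↥Mset} (hpq : p ≠ q)
    (h : ∀ y z : ↥Mset, ‖f y - f z‖ ≤ ‖f p - f q‖ / N (↑p - ↑q) * N (↑y - ↑z)) : SNAM N f := by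
  have hlip : lipNM N f = ‖f p - f q‖ / N (↑p - ↑q) :=
    le_antisymm (lipNM_le hN fun y z _ => h y z)
      (le_csSup (LipM.bddAbove hN ⟨_, h⟩) ⟨p, q, hpq, rfl⟩)
  exact ⟨p, q, hpq, by rw [hlip, div_mul_cancel₀ _ (hN.pos_of_ne hpq).ne']⟩

end Lipschitz

section IsolatedPoint

variable {N : ℝ × ℝ → ℝ} {Y : Type*} [NormedAddCommGroup Y] {p : ↥Mset} {r : ℝ}

theorem norm_sub_le_of_eq_zero_of_ne (hN : IsNormBetween N) (hr : 0 < r)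
    (hiso : ∀ y : ↥Mset, y ≠ p → r ≤ N (↑p - ↑y)) {φ : ↥Mset → Y}
    (hφ : ∀ y, y ≠ p → φ y = 0) (y z : ↥Mset) : ‖φ y - φ z‖ ≤ ‖φ p‖ / r * N (↑y - ↑z) := by
  have hbump : ∀ y, y ≠ p → ‖φ p‖ ≤ ‖φ p‖ / r * N (↑p - ↑y) := fun y hy =>
    calc ‖φ p‖ = ‖φ p‖ / r * r := (div_mul_cancel₀ _ hr.ne').symm
      _ ≤ ‖φ p‖ / r * N (↑p - ↑y) := by gcongr; exact hiso y hy
  rcases eq_or_ne y p with rfl | hy <;> rcases eq_or_ne z y with rfl | hz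
  · simp [hN.map_zero]
  · simpa [hφ z hz] using hbump z hz
  · simp [hN.map_zero]
  · rcases eq_or_ne z p with rfl | hzp
    · simpa [hφ y hy, hN.map_sub_rev] using hbump y hy
    · simpa [hφ y hy, hφ z hzp] using mul_nonneg (div_nonneg (norm_nonneg _) hr.le) (hN.nonneg _)

theorem exists_forall_div_le_of_isolated (hN : IsNormBetween N) (hr : 0 < r)
    (hiso : ∀ y : ↥Mset, y ≠ p → r ≤ N (↑p - ↑y)) {h : ↥Mset → Y} (hh : Continuous h) (c : Y) :
    ∃ x, x ≠ p ∧ ∀ y, y ≠ p → ‖c - h y‖ / N (↑p - ↑y) ≤ ‖c - h x‖ / N (↑p - ↑x) := by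
  have : CompactSpace ↥Mset := isCompact_iff_compactSpace.mp isCompact_Mset
  have hball : {y : ↥Mset | N (↑p - ↑y) < r} = {p} := by
    ext y
    simp only [Set.mem_ofPred_eq, Set.mem_singleton_iff]
    refine ⟨fun hy => by_contra fun hyp => (hiso y hyp).not_gt hy, ?_⟩
    rintro rfl
    rwa [sub_self, hN.map_zero]
  have hclosed : IsClosed {y : ↥Mset | y ≠ p} := by
    refine isOpen_compl_iff.mp ?_
    convert isOpen_lt (hN.continuous.comp (continuous_const.sub continuous_subtype_val))
      continuous_const using 1
    exact (Set.compl_ofPred _).trans (by simpa using hball.symm)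
  obtain ⟨x, hx, hmax⟩ := hclosed.isCompact.exists_isMaxOn (exists_ne p) <|
    ((continuous_const.sub hh).norm.continuousOn).div
      (hN.continuous.comp (continuous_const.sub continuous_subtype_val)).continuousOn
      fun y hy => (hN.pos_of_ne (Ne.symm hy)).ne'
  exact ⟨x, hx, fun y hy => hmax hy⟩

end IsolatedPoint

theorem exists_SNAM_of_isolated {N : ℝ × ℝ → ℝ} {Y : Type*} [NormedAddCommGroup Y]
    [NormedSpace ℝ Y] {f : ↥Mset → Y} (hN : IsNormBetween N) (hf : LipM N f) {ε r : ℝ}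
    (hε : 0 ≤ ε) (hr : 0 < r) {p x : ↥Mset} (hiso : ∀ y : ↥Mset, y ≠ p → r ≤ N (↑p - ↑y))
    (hxp : x ≠ p) (hL : ε < lipNM N f)
    (hstar : lipNM N f * N (↑p - ↑x) ≤ ‖f p - f x‖ + ε * r) :
    ∃ g : ↥Mset → Y, LipM N g ∧ SNAM N g ∧ lipNM N (fun y => f y - g y) ≤ ε := by
  classical
  set L := lipNM N f
  set v := f p - f x
  have hd : r ≤ N (↑p - ↑x) := hiso x hxp
  have hv : 0 < ‖v‖ := by nlinarith
  -- Push `f p` away from `f x` by `ε r`: the pair `(p, x)` then has slope at least `L`.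
  set t := ε * r / ‖v‖
  have ht : 0 ≤ t := by positivity
  set g : ↥Mset → Y := fun y => if y = p then f p + t • v else f y
  have hgp : g p = f p + t • v := if_pos rfl
  have hg : ∀ y, y ≠ p → g y = f y := fun y hy => if_neg hy
  have hgx : ‖g p - g x‖ = ‖v‖ + ε * r := by
    rw [hgp, hg x hxp, add_sub_right_comm, show v + t • v = (1 + t) • v by
      rw [add_smul, one_smul], norm_smul,
      Real.norm_of_nonneg (by positivity), add_mul, one_mul, div_mul_cancel₀ _ hv.ne']
  obtain ⟨xs, hxs, hmax⟩ := exists_forall_div_le_of_isolated hN hr hiso (hf.continuous hN) (g p)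
  set R := ‖g p - g xs‖ / N (↑p - ↑xs)
  have hslope : ∀ y, y ≠ p → ‖g p - g y‖ ≤ R * N (↑p - ↑y) := fun y hy => by
    rw [← div_le_iff₀ (hN.pos_of_ne hy.symm), hg y hy]
    simpa only [R, hg xs hxs] using hmax y hy
  have hLR : L ≤ R := le_of_mul_le_mul_right (hstar.trans (hgx.symm.le.trans (hslope x hxp)))
    (hN.pos_of_ne hxp.symm)
  have hdom := hf.norm_sub_le_of_eq_off hN hLR hg hslope
  refine ⟨g, ⟨R, hdom⟩, SNAM_of_forall_le hN hxs.symm hdom, lipNM_le hN fun y z _ => ?_⟩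
  have hgp' : ‖f p - g p‖ = ε * r := by
    rw [hgp, sub_add_cancel_left, norm_neg, norm_smul, Real.norm_of_nonneg ht,
      div_mul_cancel₀ _ hv.ne']
  simpa only [hgp', mul_div_cancel_right₀ _ hr.ne'] using
    norm_sub_le_of_eq_zero_of_ne hN hr hiso (φ := fun y => f y - g y)
      (fun y hy => by simp only [hg y hy, sub_self]) y z

section GridDeficit

variable {N : ℝ × ℝ → ℝ} {Y : Type*} [NormedAddCommGroup Y] {f : ↥Mset → Y} {L ε : ℝ}

def FallsShortOnGrid (N : ℝ × ℝ → ℝ) (f : ↥Mset → Y) (L ε : ℝ) : Prop :=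
  ∀ n k (hk : k ≤ 2 ^ n) (x : ↥Mset), x ≠ gridM n k hk →
    ‖f (gridM n k hk) - f x‖ + ε * (1 / 2 ^ (n + 1)) < L * N (gridPt n k - ↑x)

theorem FallsShortOnGrid.norm_sub_le_of_le (hN : IsNormBetween N)
    (H : FallsShortOnGrid N f L ε) {m k : ℕ} (hk : k ≤ 2 ^ m) :
    ∀ l, k ≤ l → ∀ hl : l ≤ 2 ^ m,
      ‖f (gridM m k hk) - f (gridM m l hl)‖ ≤ (L - ε / 2) * ((l - k) * (1 / 2 ^ m)) := by
  refine Nat.le_induction (fun _ => by simp) fun l hkl ih hl => ?_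
  have hl' : l ≤ 2 ^ m := (Nat.le_succ l).trans hl
  have hne : gridM m (l + 1) hl ≠ gridM m l hl' := fun h =>
    absurd (congrArg (fun z : ↥Mset => (z : ℝ × ℝ)) h) (by simp [gridM, gridPt])
  have hstep := H m l hl' _ hne
  rw [coe_gridM, hN.map_gridPt_sub_gridPt, Nat.cast_succ, sub_add_cancel_left, abs_neg, abs_one,
    one_mul, one_div_two_pow_succ] at hstep
  calc ‖f (gridM m k hk) - f (gridM m (l + 1) hl)‖
      ≤ ‖f (gridM m k hk) - f (gridM m l hl')‖ + ‖f (gridM m l hl') - f (gridM m (l + 1) hl)‖ :=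
        norm_sub_le_norm_sub_add_norm_sub _ _ _
    _ ≤ (L - ε / 2) * ((l - k) * (1 / 2 ^ m)) + (L - ε / 2) * (1 / 2 ^ m) := by
        gcongr
        · exact ih hl'
        · linarith
    _ = (L - ε / 2) * (((l + 1 : ℕ) - k) * (1 / 2 ^ m)) := by push_cast; ring

theorem FallsShortOnGrid.norm_sub_le_same_level (hN : IsNormBetween N)
    (H : FallsShortOnGrid N f L ε) {m k l : ℕ} (hk : k ≤ 2 ^ m) (hl : l ≤ 2 ^ m) :
    ‖f (gridM m k hk) - f (gridM m l hl)‖ ≤ (L - ε / 2) * N (gridPt m k - gridPt m l) := by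
  wlog hkl : k ≤ l generalizing k l
  · rw [norm_sub_rev, hN.map_sub_rev]
    exact this hl hk (by omega)
  rw [hN.map_gridPt_sub_gridPt, abs_sub_comm, abs_of_nonneg (by simp [hkl])]
  exact H.norm_sub_le_of_le hN hk l hkl hl

theorem FallsShortOnGrid.norm_sub_le_descend (hN : IsNormBetween N)
    (H : FallsShortOnGrid N f L ε) (hfL : ∀ p q : ↥Mset, ‖f p - f q‖ ≤ L * N (↑p - ↑q))
    (hε : 0 ≤ ε) (hεL : ε ≤ 2 * L) {n k m l : ℕ} (hk : k ≤ 2 ^ n) (hl : l ≤ 2 ^ m)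
    (hnm : n ≤ m) :
    ‖f (gridM n k hk) - f (gridM m l hl)‖ ≤
      L * (1 / 2 ^ n) + (L - ε / 2) * N (gridPt n k - gridPt m l) := by
  obtain ⟨i, rfl⟩ := Nat.exists_eq_add_of_le hnm
  have hk' : k * 2 ^ i ≤ 2 ^ (n + i) := by rw [pow_add]; exact Nat.mul_le_mul_right _ hk
  have hfst : (gridPt (n + i) (k * 2 ^ i)).1 = (gridPt n k).1 := by
    simp only [gridPt, pow_add]; push_cast; field_simp
  have hvert : ‖f (gridM n k hk) - f (gridM (n + i) (k * 2 ^ i) hk')‖ ≤ L * (1 / 2 ^ n) := by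
    refine (hfL _ _).trans (mul_le_mul_of_nonneg_left ?_ (by linarith))
    rw [coe_gridM, coe_gridM, hN.map_sub_of_fst_eq hfst.symm]
    simp only [gridPt]
    rw [abs_of_nonneg (sub_nonneg.mpr (one_div_pow_le_one_div_pow_of_le one_le_two (by omega)))]
    linarith [show (0 : ℝ) < 1 / 2 ^ (n + i) by positivity]
  have hwalk : ‖f (gridM (n + i) (k * 2 ^ i) hk') - f (gridM (n + i) l hl)‖ ≤
      (L - ε / 2) * N (gridPt n k - gridPt (n + i) l) := by
    refine (H.norm_sub_le_same_level hN hk' hl).trans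
      (mul_le_mul_of_nonneg_left ?_ (by linarith))
    rw [hN.map_sub_of_snd_eq (u := gridPt (n + i) (k * 2 ^ i)) (v := gridPt (n + i) l) rfl,
      hfst]
    exact hN.abs_fst_le (gridPt n k - gridPt (n + i) l)
  exact (norm_sub_le_norm_sub_add_norm_sub _ _ _).trans (add_le_add hvert hwalk)

theorem FallsShortOnGrid.norm_sub_le (hN : IsNormBetween N) (H : FallsShortOnGrid N f L ε)
    (hfL : ∀ p q : ↥Mset, ‖f p - f q‖ ≤ L * N (↑p - ↑q)) (hε : 0 < ε) (hεL : ε < L)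
    {n k m l : ℕ} (hk : k ≤ 2 ^ n) (hl : l ≤ 2 ^ m) :
    ‖f (gridM n k hk) - f (gridM m l hl)‖ ≤
      (L - ε ^ 2 / (8 * L)) * N (gridPt n k - gridPt m l) := by
  wlog hnm : n ≤ m generalizing n k m l
  · rw [norm_sub_rev, hN.map_sub_rev]
    exact this hl hk (by omega)
  rcases eq_or_ne (gridM m l hl) (gridM n k hk) with heq | hne
  · have hpt : gridPt m l = gridPt n k := congrArg Subtype.val heq
    simp [heq, hpt, hN.map_zero]
  set d := N (gridPt n k - gridPt m l)
  have hd : 0 < d := hN.pos_of_ne hne.symm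
  have hL : 0 < L := hε.trans hεL
  have hδ : ε ^ 2 / (8 * L) ≤ ε / 4 := by
    rw [div_le_iff₀ (by positivity)]; nlinarith
  rcases le_or_gt (4 * L * (1 / 2 ^ n)) (ε * d) with hfar | hnear
  · calc ‖f (gridM n k hk) - f (gridM m l hl)‖ ≤ L * (1 / 2 ^ n) + (L - ε / 2) * d :=
          H.norm_sub_le_descend hN hfL hε.le (by linarith) hk hl hnm
      _ ≤ (L - ε ^ 2 / (8 * L)) * d := by nlinarith
  · -- Close together: the margin at `gridM n k hk` is already a fixed fraction of `d`.
    have hmargin : ε ^ 2 / (8 * L) * d ≤ ε * (1 / 2 ^ (n + 1)) := by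
      rw [div_mul_eq_mul_div, div_le_iff₀ (by positivity), one_div_two_pow_succ]
      nlinarith
    have := H n k hk _ hne
    rw [coe_gridM] at this
    linarith [norm_nonneg (f (gridM n k hk) - f (gridM m l hl))]

theorem norm_sub_le_of_forall_gridM (hN : IsNormBetween N) (hf : LipM N f) {c : ℝ} (hc : 0 ≤ c)
    (h : ∀ n k (hk : k ≤ 2 ^ n) m l (hl : l ≤ 2 ^ m),
      ‖f (gridM n k hk) - f (gridM m l hl)‖ ≤ c * N (gridPt n k - gridPt m l))
    (p q : ↥Mset) : ‖f p - f q‖ ≤ c * N (↑p - ↑q) := by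
  set K := lipNM N f
  have hK := lipNM_nonneg hN hf
  refine le_of_forall_pos_le_add fun e he => ?_
  set η := e / (2 * (K + c) + 1)
  have hη : 0 < η := by positivity
  have hηe : 2 * (K + c) * η ≤ e :=
    calc 2 * (K + c) * η ≤ (2 * (K + c) + 1) * η := by gcongr; linarith
      _ = e := mul_div_cancel₀ e (by positivity)
  obtain ⟨n, k, hk, hp⟩ := exists_gridPt_near hN p.2 hη
  obtain ⟨m, l, hl, hq⟩ := exists_gridPt_near hN q.2 hη
  have hfp := hf.norm_sub_le hN p (gridM n k hk)
  have hfq := hf.norm_sub_le hN q (gridM m l hl)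
  have hgrid := h n k hk m l hl
  rw [coe_gridM] at hfp hfq
  have hdist : N (gridPt n k - gridPt m l) ≤ N (↑p - ↑q) + 2 * η := by
    have := hN.map_sub_le_add (gridPt n k) p (gridPt m l)
    have := hN.map_sub_le_add p q (gridPt m l)
    rw [hN.map_sub_rev] at hp
    linarith
  have htri : ‖f p - f q‖ ≤ ‖f p - f (gridM n k hk)‖ +
      ‖f (gridM n k hk) - f (gridM m l hl)‖ + ‖f q - f (gridM m l hl)‖ := by
    have := norm_sub_le_norm_sub_add_norm_sub (f p) (f (gridM n k hk)) (f q)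
    have := norm_sub_le_norm_sub_add_norm_sub (f (gridM n k hk)) (f (gridM m l hl)) (f q)
    rw [norm_sub_rev (f (gridM m l hl))] at this
    linarith
  have := mul_le_mul_of_nonneg_left hp.le hK
  have := mul_le_mul_of_nonneg_left hq.le hK
  have := mul_le_mul_of_nonneg_left hdist hc
  linarith

end GridDeficit

theorem exists_gridM_almost_attains_lipNM {N : ℝ × ℝ → ℝ} {Y : Type*} [NormedAddCommGroup Y]
    {f : ↥Mset → Y} (hN : IsNormBetween N) (hf : LipM N f) {ε : ℝ} (hε : 0 < ε)
    (hL : ε < lipNM N f) :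
    ∃ n k, ∃ hk : k ≤ 2 ^ n, ∃ x : ↥Mset, x ≠ gridM n k hk ∧
      lipNM N f * N (gridPt n k - ↑x) ≤ ‖f (gridM n k hk) - f x‖ + ε * (1 / 2 ^ (n + 1)) := by
  by_contra hshort
  push Not at hshort
  set L := lipNM N f
  have hδ : 0 < ε ^ 2 / (8 * L) := by have := hε.trans hL; positivity
  have hδL : ε ^ 2 / (8 * L) ≤ L := by
    rw [div_le_iff₀ (by linarith)]; nlinarith
  have hgrid := fun n k (hk : k ≤ 2 ^ n) m l (hl : l ≤ 2 ^ m) =>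
    FallsShortOnGrid.norm_sub_le hN hshort (hf.norm_sub_le hN) hε hL hk hl
  have : L ≤ L - ε ^ 2 / (8 * L) :=
    lipNM_le hN fun p q _ => norm_sub_le_of_forall_gridM hN hf (by linarith) hgrid p q
  linarith

theorem stmt_4_general (N : ℝ × ℝ → ℝ) (hN : IsNormBetween N)
    {Y : Type*} [NormedAddCommGroup Y] [NormedSpace ℝ Y]
    (f : ↥Mset → Y) (hf : LipM N f) (ε : ℝ) (hε : 0 < ε) :
    ∃ g : ↥Mset → Y, LipM N g ∧ SNAM N g ∧ lipNM N (fun p => f p - g p) ≤ ε := by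
  rcases le_or_gt (lipNM N f) ε with hL | hL
  · obtain ⟨p, q, hpq⟩ := exists_pair_ne ↥Mset
    exact ⟨0, ⟨0, fun p q => by simp⟩, SNAM_of_forall_le hN hpq (by simp),
      by simpa using hL⟩
  · obtain ⟨n, k, hk, x, hx, hstar⟩ := exists_gridM_almost_attains_lipNM hN hf hε hL
    exact exists_SNAM_of_isolated hN hf hε.le (by positivity)
      (fun y hy => gridPt_isolated hN y.2 (Subtype.coe_ne_coe.mpr hy)) hx hL hstar

/-- For every norm `N` on `ℝ²` with `‖·‖_∞ ≤ N ≤ ‖·‖₁` and every Banach space `Y`, the set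
of strongly norm attaining Lipschitz maps `M → Y` is dense: every Lipschitz `f : M → Y` is
within `ε` (in Lipschitz distance) of a strongly norm attaining Lipschitz map. -/
theorem stmt_4 (N : ℝ × ℝ → ℝ) (hN : IsNormBetween N)
    {Y : Type*} [NormedAddCommGroup Y] [NormedSpace ℝ Y] [CompleteSpace Y]
    (f : ↥Mset → Y) (hf : LipM N f) (ε : ℝ) (hε : 0 < ε) :
    ∃ g : ↥Mset → Y, LipM N g ∧ SNAM N g ∧ lipNM N (fun p => f p - g p) ≤ ε :=
  stmt_4_general N hN f hf ε hε
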